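/- Let X be a Polish space, Y a compact metric space, E ⊂ X × Y a Borel set all of whose sections E_x = {y : (x,y) ∈ E} are nonempty and compact, and u : X × Y → EReal a Borel function such that for every x ∈ X the map y ↦ u(x,y) is upper semicontinuous on E_x. Then for every probability measure μ on X there exists a function s : X → Y, measurable with respect to the μ-completion of the Borel σ-algebra (in particular AEMeasurable with respect to μ), such that for μ-almost every x one has (x, s(x)) ∈ E and u(x, s(x)) = ⨆_{y ∈ E_x} u(x, y). -/

import Mathlib

/-!
The value function `x ↦ ⨆ y ∈ E_x, u (x, y)` and the sets `{x | (E_x ∩ B).Nonempty}` are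
projections of Borel subsets of `X × Y`, hence analytic, hence `μ`-measurable by Choquet's
capacitability argument: an analytic set `f '' univ` with `f : (ℕ → ℕ) → X` continuous is
approximated in measure from inside by the compact sets `f '' ∏ j, Iic (b j)`.
By upper semicontinuity the argmax `G x = sectionArgmax E u x` is nonempty and compact, and it
meets a closed set `B` iff `E_x ∩ B` is nonempty and the supremum of `u (x, ·)` over `E_x ∩ B`
reaches the one over `E_x`; so `G` is measurable for the completed σ-algebra.
A Kuratowski–Ryll-Nardzewski selection finishes: shrink `G x` step by step to its part inside
the first ball of radius `1 / (k + 1)`, centred on a dense sequence, that meets it; the centres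
are measurable and converge to a point of `G x`.
-/

open MeasureTheory Set Filter Topology
open scoped ENNReal

section Capacitability

theorem Monotone.exists_measure_iUnion_le_add {α : Type*} [MeasurableSpace α] {μ : Measure α}
    {s : ℕ → Set α} (hs : Monotone s) (hfin : μ (⋃ n, s n) ≠ ∞) {ε : ℝ≥0∞} (hε : ε ≠ 0) :
    ∃ n, μ (⋃ n, s n) ≤ μ (s n) + ε := by
  obtain ⟨n, hn⟩ := (((tendsto_measure_iUnion_atTop hs).add_const ε).eventually_const_lt
    (ENNReal.lt_add_right hfin hε)).exists
  exact ⟨n, hn.le⟩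

theorem exists_measure_range_le_measure_image_add {α : Type*} [MeasurableSpace α]
    (μ : Measure α) [IsFiniteMeasure μ] (f : (ℕ → ℕ) → α) {ε : ℝ≥0∞} (hε : ε ≠ 0) :
    ∃ b : ℕ → ℕ, ∀ k, μ (range f) ≤ μ (f '' {σ | ∀ j < k, σ j ≤ b j}) + ε := by
  obtain ⟨δ, hδ, hδε⟩ := ENNReal.exists_pos_sum_of_countable hε ℕ
  have hstep (k : ℕ) (S : Set (ℕ → ℕ)) :
      ∃ n, μ (f '' S) ≤ μ (f '' (S ∩ {σ | σ k ≤ n})) + δ k := by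
    have hmono : Monotone fun n => f '' (S ∩ {σ | σ k ≤ n}) :=
      fun m n hmn => image_mono (inter_subset_inter_right _ fun σ hσ => le_trans hσ hmn)
    have hunion : ⋃ n, f '' (S ∩ {σ | σ k ≤ n}) = f '' S := by
      rw [← image_iUnion, ← inter_iUnion, iUnion_eq_univ_iff.2 fun σ => ⟨σ k, le_refl (σ k)⟩,
        inter_univ]
    simpa only [hunion] using
      hmono.exists_measure_iUnion_le_add (measure_ne_top _ _) (ENNReal.coe_ne_zero.2 (hδ k).ne')
  choose N hN using hstep
  -- the bound `b k` depends on the set cut out by `b 0, …, b (k - 1)`, so recurse on the sets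
  let S : ℕ → Set (ℕ → ℕ) := fun k => Nat.rec univ (fun k Sk => Sk ∩ {σ | σ k ≤ N k Sk}) k
  have hS (k : ℕ) (σ : ℕ → ℕ) : σ ∈ S k ↔ ∀ j < k, σ j ≤ N j (S j) := by
    induction k with
    | zero => simp [S]
    | succ k ih => rw [Nat.forall_lt_succ_right, ← ih]; rfl
  have hsum (k : ℕ) : μ (range f) ≤ μ (f '' S k) + ∑ j ∈ Finset.range k, (δ j : ℝ≥0∞) := by
    induction k with
    | zero => simp [S]
    | succ k ih =>
      calc μ (range f) ≤ μ (f '' S k) + ∑ j ∈ Finset.range k, (δ j : ℝ≥0∞) := ih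
        _ ≤ μ (f '' S (k + 1)) + δ k + ∑ j ∈ Finset.range k, (δ j : ℝ≥0∞) := by
          gcongr; exact hN k (S k)
        _ = μ (f '' S (k + 1)) + ∑ j ∈ Finset.range (k + 1), (δ j : ℝ≥0∞) := by
          rw [Finset.sum_range_succ, add_assoc, add_comm (δ k : ℝ≥0∞)]
  refine ⟨fun k => N k (S k), fun k => ?_⟩
  rw [show {σ | ∀ j < k, σ j ≤ N j (S j)} = S k from ext fun σ => (hS k σ).symm]
  refine (hsum k).trans ?_
  gcongr
  exact (ENNReal.sum_le_tsum _).trans hδε.le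

theorem mem_image_pi_Iic_of_forall_mem_closure {X : Type*} [TopologicalSpace X] [T2Space X]
    [FirstCountableTopology X] {f : (ℕ → ℕ) → X} (hf : Continuous f) (b : ℕ → ℕ) {x : X}
    (hx : ∀ k, x ∈ closure (f '' {σ | ∀ j < k, σ j ≤ b j})) :
    x ∈ f '' univ.pi fun j => Iic (b j) := by
  obtain ⟨U, hU⟩ := (𝓝 x).exists_antitone_basis
  have hnear (k : ℕ) : ∃ σ : ℕ → ℕ, (∀ j < k, σ j ≤ b j) ∧ f σ ∈ U k := by
    obtain ⟨_, hfσ, σ, hσ, rfl⟩ := mem_closure_iff_nhds.1 (hx k) (U k) (hU.mem k)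
    exact ⟨σ, hσ, hfσ⟩
  choose σ hσb hσU using hnear
  -- truncating `σ k` at `b` lands in a compact set without changing its first `k` coordinates
  obtain ⟨τ, hτ, φ, hφ, hlim⟩ :=
    (isCompact_univ_pi fun j => (finite_Iic (b j)).isCompact).tendsto_subseq
      (x := fun k j => min (σ k j) (b j)) fun k j _ => mem_Iic.2 (min_le_right _ _)
  have hστ : Tendsto (σ ∘ φ) atTop (𝓝 τ) := by
    rw [tendsto_pi_nhds] at hlim ⊢
    refine fun j => (hlim j).congr' ?_
    filter_upwards [eventually_gt_atTop j] with i hi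
    exact min_eq_left (hσb _ j (hi.trans_le hφ.le_apply))
  exact ⟨τ, hτ, tendsto_nhds_unique ((hf.tendsto τ).comp hστ)
    ((hU.tendsto hσU).comp hφ.tendsto_atTop)⟩

variable {X : Type*} [TopologicalSpace X] [T2Space X] [FirstCountableTopology X]
  [MeasurableSpace X] [OpensMeasurableSpace X] (μ : Measure X) [IsFiniteMeasure μ]

theorem MeasureTheory.AnalyticSet.exists_isCompact_subset_measure_le_add {s : Set X}
    (hs : AnalyticSet s) {ε : ℝ≥0∞} (hε : ε ≠ 0) : ∃ K ⊆ s, IsCompact K ∧ μ s ≤ μ K + ε := by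
  rw [AnalyticSet] at hs
  obtain rfl | ⟨f, hf, rfl⟩ := hs
  · exact ⟨∅, subset_rfl, isCompact_empty, by simp⟩
  obtain ⟨b, hb⟩ := exists_measure_range_le_measure_image_add μ f hε
  let T : ℕ → Set (ℕ → ℕ) := fun k => {σ | ∀ j < k, σ j ≤ b j}
  have hanti : Antitone fun k => closure (f '' T k) :=
    fun k l hkl => closure_mono (image_mono fun σ hσ j hj => hσ j (hj.trans_le hkl))
  refine ⟨f '' univ.pi fun j => Iic (b j), image_subset_range _ _,
    (isCompact_univ_pi fun j => (finite_Iic (b j)).isCompact).image hf, ?_⟩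
  calc μ (range f) ≤ (⨅ k, μ (closure (f '' T k))) + ε := by
        rw [ENNReal.iInf_add]
        exact le_iInf fun k => (hb k).trans (by gcongr; exact subset_closure)
    _ = μ (⋂ k, closure (f '' T k)) + ε := by
        rw [hanti.measure_iInter (fun k => isClosed_closure.nullMeasurableSet)
          ⟨0, measure_ne_top _ _⟩]
    _ ≤ μ (f '' univ.pi fun j => Iic (b j)) + ε := by
        gcongr
        exact fun x hx => mem_image_pi_Iic_of_forall_mem_closure hf b (mem_iInter.1 hx)

theorem MeasureTheory.AnalyticSet.nullMeasurableSet {s : Set X} (hs : AnalyticSet s) :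
    NullMeasurableSet s μ := by
  choose K hKs hK hμK using fun n : ℕ =>
    hs.exists_isCompact_subset_measure_le_add μ (ENNReal.inv_ne_zero.2 (ENNReal.natCast_ne_top n))
  have hle : μ s ≤ μ (⋃ n, K n) := by
    refine ENNReal.le_of_forall_pos_le_add fun ε hε _ => ?_
    obtain ⟨n, hn⟩ := ENNReal.exists_inv_nat_lt (ENNReal.coe_ne_zero.2 hε.ne')
    exact (hμK n).trans (add_le_add (measure_mono (subset_iUnion K n)) hn.le)
  have hmeas : MeasurableSet (⋃ n, K n) := .iUnion fun n => (hK n).measurableSet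
  exact hmeas.nullMeasurableSet.congr
    (ae_eq_of_subset_of_measure_ge (iUnion_subset hKs) hle hmeas.nullMeasurableSet
      (measure_ne_top _ _))

end Capacitability

section Selection

open Metric

variable {X Y : Type*}

def MeasurableClosedHits [MeasurableSpace X] [TopologicalSpace Y] (C : X → Set Y) : Prop :=
  ∀ ⦃B : Set Y⦄, IsClosed B → MeasurableSet {x | (C x ∩ B).Nonempty}

variable [MetricSpace Y]

/-- Junk value `0` when no ball `closedBall (D n) r` meets `K`. -/
noncomputable def firstBallIndex (D : ℕ → Y) (r : ℝ) (K : Set Y) : ℕ :=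
  sInf {n | (K ∩ closedBall (D n) r).Nonempty}

noncomputable def ballRefinement (D : ℕ → Y) (r : ℕ → ℝ) (C : X → Set Y) : ℕ → X → Set Y
  | 0 => C
  | k + 1 => fun x => ballRefinement D r C k x ∩
      closedBall (D (firstBallIndex D (r k) (ballRefinement D r C k x))) (r k)

variable {D : ℕ → Y} {r : ℝ} {C : X → Set Y}

theorem exists_inter_closedBall_nonempty (hD : DenseRange D) (hr : 0 < r) {K : Set Y}
    (hK : K.Nonempty) : ∃ n, (K ∩ closedBall (D n) r).Nonempty := by
  obtain ⟨y, hy⟩ := hK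
  obtain ⟨n, hn⟩ := mem_closure_range_iff.1 (hD y) r hr
  exact ⟨n, y, hy, mem_closedBall.2 hn.le⟩

theorem inter_closedBall_firstBallIndex_nonempty (hD : DenseRange D) (hr : 0 < r) {K : Set Y}
    (hK : K.Nonempty) : (K ∩ closedBall (D (firstBallIndex D r K)) r).Nonempty :=
  Nat.sInf_mem (exists_inter_closedBall_nonempty hD hr hK)

section Measurable

variable [MeasurableSpace X]

theorem MeasurableClosedHits.measurable_firstBallIndex (hC : MeasurableClosedHits C)
    (hD : DenseRange D) (hr : 0 < r) (hne : ∀ x, (C x).Nonempty) :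
    Measurable fun x => firstBallIndex D r (C x) := by
  classical
  have h x := exists_inter_closedBall_nonempty hD hr (hne x)
  convert measurable_find h fun n => hC isClosed_closedBall using 2 with x
  exact Nat.sInf_def (h x)

theorem MeasurableClosedHits.inter_closedBall_firstBallIndex (hC : MeasurableClosedHits C)
    (hD : DenseRange D) (hr : 0 < r) (hne : ∀ x, (C x).Nonempty) :
    MeasurableClosedHits fun x => C x ∩ closedBall (D (firstBallIndex D r (C x))) r := by
  intro B hB
  have hsplit : {x | (C x ∩ closedBall (D (firstBallIndex D r (C x))) r ∩ B).Nonempty} =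
      ⋃ n, (fun x => firstBallIndex D r (C x)) ⁻¹' {n} ∩
        {x | (C x ∩ (closedBall (D n) r ∩ B)).Nonempty} := by
    ext x
    simp [inter_assoc]
  rw [hsplit]
  exact .iUnion fun n => (hC.measurable_firstBallIndex hD hr hne (measurableSet_singleton n)).inter
    (hC (isClosed_closedBall.inter hB))

end Measurable

variable {r : ℕ → ℝ}

theorem ballRefinement_nonempty (hD : DenseRange D) (hr : ∀ k, 0 < r k)
    (hne : ∀ x, (C x).Nonempty) : ∀ k x, (ballRefinement D r C k x).Nonempty
  | 0 => hne
  | k + 1 => fun x =>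
    inter_closedBall_firstBallIndex_nonempty hD (hr k) (ballRefinement_nonempty hD hr hne k x)

theorem isClosed_ballRefinement (hC : ∀ x, IsClosed (C x)) :
    ∀ k x, IsClosed (ballRefinement D r C k x)
  | 0 => hC
  | k + 1 => fun x => (isClosed_ballRefinement hC k x).inter isClosed_closedBall

theorem MeasurableClosedHits.ballRefinement [MeasurableSpace X] (hC : MeasurableClosedHits C)
    (hD : DenseRange D) (hr : ∀ k, 0 < r k) (hne : ∀ x, (C x).Nonempty) :
    ∀ k, MeasurableClosedHits (ballRefinement D r C k)
  | 0 => hC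
  | k + 1 => (hC.ballRefinement hD hr hne k).inter_closedBall_firstBallIndex hD (hr k)
      (ballRefinement_nonempty hD hr hne k)

theorem MeasurableClosedHits.exists_measurable_selection [MeasurableSpace X]
    [TopologicalSpace.SeparableSpace Y] [MeasurableSpace Y] [BorelSpace Y]
    (hC : MeasurableClosedHits C) (hne : ∀ x, (C x).Nonempty)
    (hcpt : ∀ x, IsCompact (C x)) : ∃ s : X → Y, Measurable s ∧ ∀ x, s x ∈ C x := by
  rcases isEmpty_or_nonempty X with hX | ⟨⟨x₀⟩⟩
  · exact ⟨fun x => (hne x).some, Subsingleton.measurable, fun x => (hne x).some_mem⟩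
  have : Nonempty Y := ⟨(hne x₀).some⟩
  obtain ⟨D, hD⟩ := TopologicalSpace.exists_dense_seq Y
  set r : ℕ → ℝ := fun k => 1 / (k + 1)
  have hr k : 0 < r k := Nat.one_div_pos_of_nat
  set R := _root_.ballRefinement D r C
  have hRne := ballRefinement_nonempty hD hr hne
  have hlim x : ∃ y, ∀ k, y ∈ R k x := by
    obtain ⟨y, hy⟩ := IsCompact.nonempty_iInter_of_sequence_nonempty_isCompact_isClosed (R · x)
      (fun k => inter_subset_left) (hRne · x) (hcpt x)
      (isClosed_ballRefinement (fun x => (hcpt x).isClosed) · x)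
    exact ⟨y, mem_iInter.1 hy⟩
  choose s hs using hlim
  refine ⟨s, measurable_of_tendsto_metrizable (f := fun k x => D (firstBallIndex D (r k) (R k x)))
    (fun k => measurable_from_nat.comp
      ((hC.ballRefinement hD hr hne k).measurable_firstBallIndex hD (hr k) (hRne k))) ?_,
    fun x => hs x 0⟩
  refine tendsto_pi_nhds.2 fun x => tendsto_iff_dist_tendsto_zero.2 ?_
  refine squeeze_zero (fun _ => dist_nonneg) (fun k => ?_) tendsto_one_div_add_atTop_nhds_zero_nat
  rw [dist_comm]
  exact mem_closedBall.1 (hs x (k + 1)).2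

end Selection

section FiberwiseMax

variable {X Y : Type*}

noncomputable def sectionSup (F : Set (X × Y)) (u : X × Y → EReal) (x : X) : EReal :=
  ⨆ y ∈ {y | (x, y) ∈ F}, u (x, y)

def sectionArgmax (F : Set (X × Y)) (u : X × Y → EReal) (x : X) : Set Y :=
  {y | (x, y) ∈ F ∧ sectionSup F u x ≤ u (x, y)}

theorem UpperSemicontinuousOn.exists_biSup_le {β : Type*} [TopologicalSpace Y]
    [CompleteLinearOrder β] {f : Y → β} {K : Set Y} (hf : UpperSemicontinuousOn f K)
    (hK : IsCompact K) (hne : K.Nonempty) : ∃ y ∈ K, ⨆ z ∈ K, f z ≤ f y := by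
  obtain ⟨y, hy, hmax⟩ := hf.exists_isMaxOn hne hK
  exact ⟨y, hy, iSup₂_le fun z hz => hmax hz⟩

variable [TopologicalSpace Y] {E : Set (X × Y)} {u : X × Y → EReal}

theorem sectionArgmax_nonempty {x : X} (hne : {y | (x, y) ∈ E}.Nonempty)
    (hcpt : IsCompact {y | (x, y) ∈ E})
    (husc : UpperSemicontinuousOn (fun y => u (x, y)) {y | (x, y) ∈ E}) :
    (sectionArgmax E u x).Nonempty :=
  husc.exists_biSup_le hcpt hne

theorem isCompact_sectionArgmax {x : X} (hcpt : IsCompact {y | (x, y) ∈ E})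
    (husc : UpperSemicontinuousOn (fun y => u (x, y)) {y | (x, y) ∈ E}) :
    IsCompact (sectionArgmax E u x) :=
  husc.isCompact_inter_preimage_Ici hcpt _

theorem sectionArgmax_inter_nonempty_iff {B : Set Y} {x : X}
    (hcpt : IsCompact ({y | (x, y) ∈ E} ∩ B))
    (husc : UpperSemicontinuousOn (fun y => u (x, y)) ({y | (x, y) ∈ E} ∩ B)) :
    (sectionArgmax E u x ∩ B).Nonempty ↔
      x ∈ Prod.fst '' (E ∩ Prod.snd ⁻¹' B) ∧
        sectionSup E u x ≤ sectionSup (E ∩ Prod.snd ⁻¹' B) u x := by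
  constructor
  · rintro ⟨y, ⟨hyE, hy⟩, hyB⟩
    exact ⟨⟨(x, y), ⟨hyE, hyB⟩, rfl⟩, hy.trans (le_biSup (fun y => u (x, y)) ⟨hyE, hyB⟩)⟩
  · rintro ⟨⟨⟨_, y⟩, hy, rfl⟩, hle⟩
    obtain ⟨z, hz, hmax⟩ := husc.exists_biSup_le hcpt ⟨y, hy⟩
    exact ⟨z, ⟨hz.1, hle.trans hmax⟩, hz.2⟩

variable [TopologicalSpace X] [PolishSpace X] [MeasurableSpace X] [BorelSpace X]
  [PolishSpace Y] [MeasurableSpace Y] [BorelSpace Y] {μ : Measure X} [IsFiniteMeasure μ]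

theorem MeasurableSet.nullMeasurableSet_image_fst {F : Set (X × Y)} (hF : MeasurableSet F) :
    NullMeasurableSet (Prod.fst '' F) μ :=
  (hF.analyticSet_image measurable_fst).nullMeasurableSet μ

theorem nullMeasurable_sectionSup {F : Set (X × Y)} (hF : MeasurableSet F) (hu : Measurable u) :
    NullMeasurable (sectionSup F u) μ := by
  refine measurable_of_Ioi (δ := NullMeasurableSpace X μ) fun q => ?_
  change NullMeasurableSet (sectionSup F u ⁻¹' Ioi q) μ
  have hpre : sectionSup F u ⁻¹' Ioi q = Prod.fst '' (F ∩ u ⁻¹' Ioi q) := by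
    ext x
    simp [sectionSup, lt_iSup_iff]
  rw [hpre]
  exact (hF.inter (hu measurableSet_Ioi)).nullMeasurableSet_image_fst

theorem measurableClosedHits_sectionArgmax (hE : MeasurableSet E) (hu : Measurable u)
    (hcpt : ∀ x, IsCompact {y | (x, y) ∈ E})
    (husc : ∀ x, UpperSemicontinuousOn (fun y => u (x, y)) {y | (x, y) ∈ E}) :
    MeasurableClosedHits (X := NullMeasurableSpace X μ) (sectionArgmax E u) := by
  intro B hB
  change NullMeasurableSet {x | (sectionArgmax E u x ∩ B).Nonempty} μ
  have hEB : MeasurableSet (E ∩ Prod.snd ⁻¹' B) := hE.inter (measurable_snd hB.measurableSet)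
  have hhits : {x | (sectionArgmax E u x ∩ B).Nonempty} = Prod.fst '' (E ∩ Prod.snd ⁻¹' B) ∩
      {x | sectionSup E u x ≤ sectionSup (E ∩ Prod.snd ⁻¹' B) u x} :=
    ext fun x => sectionArgmax_inter_nonempty_iff ((hcpt x).inter_right hB)
      ((husc x).mono inter_subset_left)
  rw [hhits]
  exact hEB.nullMeasurableSet_image_fst.inter
    (nullMeasurableSet_le (nullMeasurable_sectionSup hE hu).aemeasurable
      (nullMeasurable_sectionSup hEB hu).aemeasurable)

end FiberwiseMax

/-- Measurable selection of fiberwise maximizers: if the sections of the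
Borel set `E` are nonempty and compact and `u` is fiberwise upper semicontinuous on them,
then for every probability measure `μ` on `X` there is a `μ`-a.e. defined measurable
selection `s` attaining the fiberwise supremum. -/
theorem measurable_selection_of_fiberwise_max
    {X Y : Type*}
    [TopologicalSpace X] [PolishSpace X] [MeasurableSpace X] [BorelSpace X]
    [MetricSpace Y] [CompactSpace Y] [MeasurableSpace Y] [BorelSpace Y]
    (E : Set (X × Y)) (hE : MeasurableSet E)
    (hE_ne : ∀ x : X, ({y : Y | (x, y) ∈ E}).Nonempty)
    (hE_cpt : ∀ x : X, IsCompact {y : Y | (x, y) ∈ E})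
    (u : X × Y → EReal) (hu : Measurable u)
    (hu_usc : ∀ x : X, UpperSemicontinuousOn (fun y => u (x, y)) {y : Y | (x, y) ∈ E}) :
    ∀ μ : Measure X, IsProbabilityMeasure μ →
      ∃ s : X → Y, AEMeasurable s μ ∧
        ∀ᵐ x ∂μ, (x, s x) ∈ E ∧
          u (x, s x) = ⨆ y ∈ {y : Y | (x, y) ∈ E}, u (x, y) := by
  intro μ _
  obtain ⟨s, hs, hsmax⟩ :=
    (measurableClosedHits_sectionArgmax (μ := μ) hE hu hE_cpt hu_usc).exists_measurable_selection
      (fun x => sectionArgmax_nonempty (hE_ne x) (hE_cpt x) (hu_usc x))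
      (fun x => isCompact_sectionArgmax (hE_cpt x) (hu_usc x))
  refine ⟨s, NullMeasurable.aemeasurable hs, ae_of_all _ fun x => ⟨(hsmax x).1, ?_⟩⟩
  exact le_antisymm (le_biSup (fun y => u (x, y)) (hsmax x).1) (hsmax x).2
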